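/- arXiv:1706.01431 — 4 statements merged into one kernel-verified Lean document; each statement's English description precedes it below -/
import Mathlib

section
/- Let G be a finite group and let H, K be subgroups of G such that H·H^x = H^x·H (as sets) for every x ∈ K, where H^x denotes the conjugate of H by x. If K ≤ H^K, where H^K = ⟨H^x : x ∈ K⟩ denotes the normal closure of H under conjugation by elements of K, then K ≤ H. -/
open Pointwise

/-- The conjugate subgroup `H^x = x⁻¹ H x`. -/
def conjSub {G : Type*} [Group G] (H : Subgroup G) (x : G) : Subgroup G :=
  Subgroup.map ((MulAut.conj x⁻¹).toMonoidHom) H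

/-!
If `H` does not contain `H^K`, pick `k ∈ K` with `H^k ⊄ H`. The subgroup `H H^k` is strictly
larger than `H`, still permutes with its `K`-conjugates (all `K`-conjugates of `H` permute
pairwise), and its `K`-closure contains `K`. By downward induction in the finite lattice of
subgroups, `K ≤ H H^k`, so `k ∈ H H^k`; but `k = a v` with `a ∈ H`, `v ∈ H^k` forces `k ∈ H`, hence `H^k = H`.
-/

namespace Subgroup

variable {G : Type*} [Group G]

theorem coe_sup_of_commute {A B : Subgroup G} (h : Commute (A : Set G) B) :
    ((A ⊔ B : Subgroup G) : Set G) = A * B := by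
  let AB : Subgroup G :=
    { carrier := A * B
      one_mem' := ⟨1, A.one_mem, 1, B.one_mem, one_mul 1⟩
      mul_mem' := fun {x y} hx hy => by
        have hxy : x * y ∈ (A : Set G) * B * (A * B) := Set.mul_mem_mul hx hy
        rwa [mul_assoc, ← mul_assoc (B : Set G), ← h.eq, mul_assoc, ← mul_assoc (A : Set G),
          coe_mul_coe, coe_mul_coe] at hxy
      inv_mem' := fun {x} hx => by
        have hx' : x⁻¹ ∈ ((A : Set G) * B)⁻¹ := Set.inv_mem_inv.mpr hx
        rwa [mul_inv_rev, inv_coe_set, inv_coe_set, ← h.eq] at hx' }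
  have hle : A ⊔ B ≤ AB := sup_le
    (fun a ha => ⟨a, ha, 1, B.one_mem, mul_one a⟩) (fun b hb => ⟨1, A.one_mem, b, hb, one_mul b⟩)
  refine (SetLike.coe_subset_coe.mpr hle).antisymm ?_
  rintro _ ⟨a, ha, b, hb, rfl⟩
  exact mul_mem (mem_sup_left ha) (mem_sup_right hb)

end Subgroup

section conjSub

variable {G : Type*} [Group G]

theorem mem_conjSub {H : Subgroup G} {x g : G} : g ∈ conjSub H x ↔ x * g * x⁻¹ ∈ H := by
  rw [conjSub, Subgroup.mem_map_equiv]
  simp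

theorem conjSub_conjSub (H : Subgroup G) (a b : G) :
    conjSub (conjSub H a) b = conjSub H (a * b) := by
  ext g
  simp only [mem_conjSub, mul_inv_rev, mul_assoc]

theorem coe_conjSub_mul_coe_conjSub (A B : Subgroup G) (x : G) :
    (conjSub A x : Set G) * conjSub B x = MulAut.conj x⁻¹ '' (A * B) := by
  rw [Set.image_mul]
  rfl

theorem conjSub_mono {H L : Subgroup G} (h : H ≤ L) (x : G) : conjSub H x ≤ conjSub L x :=
  Subgroup.map_mono h

theorem conjSub_sup (A B : Subgroup G) (x : G) :
    conjSub (A ⊔ B) x = conjSub A x ⊔ conjSub B x :=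
  Subgroup.map_sup A B _

theorem conjSub_eq_self_of_mem {H : Subgroup G} {x : G} (hx : x ∈ H) : conjSub H x = H := by
  ext g
  rw [mem_conjSub, H.mul_mem_cancel_right (H.inv_mem hx), H.mul_mem_cancel_left hx]

theorem mem_of_mem_mul_conjSub {H : Subgroup G} {x : G}
    (hx : x ∈ (H : Set G) * conjSub H x) : x ∈ H := by
  obtain ⟨a, ha, v, hv, rfl⟩ := hx
  have hav : a * v * a⁻¹ ∈ H := by simpa [mul_assoc] using mem_conjSub.mp hv
  rw [H.mul_mem_cancel_right (H.inv_mem ha), H.mul_mem_cancel_left ha] at hav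
  exact H.mul_mem ha hav

variable {H K : Subgroup G}

/-- `H^a H^b` is the image of `H H^(b a⁻¹)` under conjugation by `a`. -/
theorem commute_conjSub_conjSub (hH : ∀ x ∈ K, Commute (H : Set G) (conjSub H x))
    {a b : G} (ha : a ∈ K) (hb : b ∈ K) :
    Commute (conjSub H a : Set G) (conjSub H b) := by
  have hba : conjSub H b = conjSub (conjSub H (b * a⁻¹)) a := by
    rw [conjSub_conjSub, inv_mul_cancel_right]
  rw [hba, Commute, SemiconjBy, coe_conjSub_mul_coe_conjSub, coe_conjSub_mul_coe_conjSub,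
    (hH _ (K.mul_mem hb (K.inv_mem ha))).eq]

theorem commute_sup_conjSub (hH : ∀ x ∈ K, Commute (H : Set G) (conjSub H x))
    {k : G} (hk : k ∈ K) :
    ∀ x ∈ K, Commute ((H ⊔ conjSub H k : Subgroup G) : Set G) (conjSub (H ⊔ conjSub H k) x) := by
  intro x hx
  have hkx : k * x ∈ K := K.mul_mem hk hx
  rw [conjSub_sup, conjSub_conjSub, Subgroup.coe_sup_of_commute (hH k hk),
    Subgroup.coe_sup_of_commute (commute_conjSub_conjSub hH hx hkx)]
  exact ((hH x hx).mul_right (hH _ hkx)).mul_left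
    ((commute_conjSub_conjSub hH hk hx).mul_right (commute_conjSub_conjSub hH hk hkx))

end conjSub

theorem stmt0 {G : Type*} [Group G] [Fintype G] (H K : Subgroup G)
    (hcomm : ∀ x ∈ K, (H : Set G) * (conjSub H x : Set G) = (conjSub H x : Set G) * (H : Set G))
    (hle : K ≤ ⨆ x ∈ K, conjSub H x) :
    K ≤ H := by
  induction H using WellFoundedGT.induction with
  | _ H ih =>
  by_contra hKH
  obtain ⟨k, hk, hkH⟩ : ∃ k ∈ K, ¬conjSub H k ≤ H := by
    by_contra! h
    exact hKH (hle.trans (iSup₂_le h))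
  have hK : K ≤ H ⊔ conjSub H k :=
    ih _ (left_lt_sup.mpr hkH) (commute_sup_conjSub hcomm hk)
      (hle.trans (iSup₂_mono fun x _ => conjSub_mono le_sup_left x))
  have hkHk : k ∈ (H : Set G) * conjSub H k := Subgroup.coe_sup_of_commute (hcomm k hk) ▸ hK hk
  exact hkH (conjSub_eq_self_of_mem (mem_of_mem_mul_conjSub hkHk)).le
end

section
/- Let G be a finite group and let H, K ∈ CD(G) with H ≺ K, meaning H < K and there is no R ∈ CD(G) with H < R < K. Then H is a normal subgroup of K. -/
open Pointwise

/-- The Chermak-Delgado measure of a subgroup: `m_G(H) = |H| * |C_G(H)|`. -/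
noncomputable def cdMeasure {G : Type*} [Group G] (H : Subgroup G) : Nat :=
  Nat.card H * Nat.card (Subgroup.centralizer (H : Set G))

/-- The Chermak-Delgado lattice of `G`: the subgroups of maximal Chermak-Delgado measure. -/
def CD (G : Type*) [Group G] : Set (Subgroup G) :=
  {H | ∀ K : Subgroup G, cdMeasure K ≤ cdMeasure H}

/-! The product formula `|AB| |A ⊓ B| = |A| |B|`, applied to `A, B` and to their centralizers,
gives `m(A) m(B) ≤ |AB| |C(A ⊔ B)| m(A ⊓ B)`. For `A, B ∈ CD(G)` maximality of `m` turns this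
into `A ⊔ B ∈ CD(G)` and `AB = A ⊔ B`. Conjugation by `k ∈ K` preserves `m`, so `B = kHk⁻¹` lies
in `CD(G)` and `H ≤ H ⊔ B ≤ K`. By the covering hypothesis, either `H ⊔ B = H`, i.e. `B ≤ H`, or
`H ⊔ B = K`; then `k⁻¹ ∈ HB`, and writing `k⁻¹ = u (k v k⁻¹)` shows `k ∈ H`. -/

namespace Subgroup

variable {G : Type*} [Group G]

theorem card_mul_mul_card_inf (A B : Subgroup G) :
    Nat.card ((A : Set G) * (B : Set G)) * Nat.card (A ⊓ B : Subgroup G) =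
      Nat.card A * Nat.card B := by
  -- orbit-stabilizer for `A` acting on `G ⧸ B`, at the coset `B`
  have hsmul (a : A) : a • (QuotientGroup.mk 1 : G ⧸ B) = QuotientGroup.mk (a : G) := by
    change (a : G) • (QuotientGroup.mk 1 : G ⧸ B) = _
    rw [MulAction.Quotient.smul_mk, smul_eq_mul, mul_one]
  have horbit :
      MulAction.orbit A (QuotientGroup.mk 1 : G ⧸ B) = QuotientGroup.mk '' (A : Set G) := by
    ext x
    simp [MulAction.mem_orbit_iff, hsmul]
  have hstab : MulAction.stabilizer A (QuotientGroup.mk 1 : G ⧸ B) = B.subgroupOf A := by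
    ext a
    simp [MulAction.mem_stabilizer_iff, mem_subgroupOf, hsmul, QuotientGroup.eq]
  have hinf : Nat.card (A ⊓ B : Subgroup G) = Nat.card (B.subgroupOf A) := by
    rw [← inf_subgroupOf_right, inf_comm]
    exact (Nat.card_congr (subgroupOfEquivOfLe inf_le_right).toEquiv).symm
  rw [card_mul_eq_card_subgroup_mul_card_quotient, ← horbit, Nat.card_coe_set_eq,
    ← MulAction.index_stabilizer, hstab, hinf, mul_assoc, mul_comm (index _), card_mul_index,
    mul_comm]

theorem coe_mul_subset_coe_sup (A B : Subgroup G) :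
    (A : Set G) * (B : Set G) ⊆ (A ⊔ B : Subgroup G) :=
  Set.mul_subset_iff.2 fun _ ha _ hb => mul_mem (mem_sup_left ha) (mem_sup_right hb)

theorem card_coe_mul_le_card_sup [Finite G] (A B : Subgroup G) :
    Nat.card ((A : Set G) * (B : Set G)) ≤ Nat.card (A ⊔ B : Subgroup G) :=
  Nat.card_mono (Set.toFinite _) (coe_mul_subset_coe_sup A B)

theorem centralizer_sup (A B : Subgroup G) :
    centralizer ((A ⊔ B : Subgroup G) : Set G) = centralizer A ⊓ centralizer B := by
  have : A ⊔ B = closure ((A : Set G) ∪ B) := by rw [closure_union, closure_eq, closure_eq]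
  rw [this, centralizer_closure]
  ext g
  simp only [mem_inf, mem_centralizer_iff, Set.mem_union, or_imp, forall_and]

theorem centralizer_map_mulEquiv {G' : Type*} [Group G'] (f : G ≃* G') (H : Subgroup G) :
    centralizer ((H.map f.toMonoidHom : Subgroup G') : Set G') =
      (centralizer (H : Set G)).map f.toMonoidHom := by
  ext g
  simp only [mem_map_equiv, mem_centralizer_iff, coe_map, Set.forall_mem_image, SetLike.mem_coe]
  refine forall₂_congr fun h _ => ?_
  rw [← f.symm.injective.eq_iff]
  simp

end Subgroup

open Subgroup

section CDLattice

variable {G : Type*} [Group G]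

theorem cdMeasure_map_mulEquiv {G' : Type*} [Group G'] (f : G ≃* G') (H : Subgroup G) :
    cdMeasure (H.map f.toMonoidHom) = cdMeasure H := by
  rw [cdMeasure, cdMeasure, centralizer_map_mulEquiv, card_map_of_injective f.injective,
    card_map_of_injective f.injective]

variable [Finite G]

theorem cdMeasure_pos (H : Subgroup G) : 0 < cdMeasure H :=
  Nat.mul_pos Nat.card_pos Nat.card_pos

theorem cdMeasure_mul_cdMeasure_le (A B : Subgroup G) :
    cdMeasure A * cdMeasure B ≤
      Nat.card ((A : Set G) * (B : Set G)) *
        Nat.card (centralizer ((A ⊔ B : Subgroup G) : Set G)) * cdMeasure (A ⊓ B) := by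
  set CA := centralizer (A : Set G)
  set CB := centralizer (B : Set G)
  have hprod : Nat.card ((CA : Set G) * (CB : Set G)) ≤
      Nat.card (centralizer ((A ⊓ B : Subgroup G) : Set G)) :=
    (card_coe_mul_le_card_sup CA CB).trans <| Nat.card_mono (Set.toFinite _) <|
      sup_le (centralizer_le inf_le_left) (centralizer_le inf_le_right)
  calc cdMeasure A * cdMeasure B
      = (Nat.card ((A : Set G) * (B : Set G)) * Nat.card (A ⊓ B : Subgroup G)) *
          (Nat.card ((CA : Set G) * (CB : Set G)) * Nat.card (CA ⊓ CB : Subgroup G)) := by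
        rw [card_mul_mul_card_inf, card_mul_mul_card_inf, cdMeasure, cdMeasure]; ring
    _ ≤ (Nat.card ((A : Set G) * (B : Set G)) * Nat.card (A ⊓ B : Subgroup G)) *
          (Nat.card (centralizer ((A ⊓ B : Subgroup G) : Set G)) *
            Nat.card (CA ⊓ CB : Subgroup G)) :=
        Nat.mul_le_mul_left _ (Nat.mul_le_mul_right _ hprod)
    _ = _ := by rw [← centralizer_sup, cdMeasure]; ring

variable {A B : Subgroup G}

theorem cdMeasure_le_card_coe_mul_mul_card_centralizer_sup (hA : A ∈ CD G) (hB : B ∈ CD G) :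
    cdMeasure A ≤
      Nat.card ((A : Set G) * (B : Set G)) *
        Nat.card (centralizer ((A ⊔ B : Subgroup G) : Set G)) := by
  have hBA : cdMeasure B = cdMeasure A := le_antisymm (hA B) (hB A)
  refine Nat.le_of_mul_le_mul_right ?_ (cdMeasure_pos A)
  calc cdMeasure A * cdMeasure A = cdMeasure A * cdMeasure B := by rw [hBA]
    _ ≤ _ := cdMeasure_mul_cdMeasure_le A B
    _ ≤ _ := Nat.mul_le_mul_left _ (hA _)

theorem sup_mem_CD (hA : A ∈ CD G) (hB : B ∈ CD G) : A ⊔ B ∈ CD G := fun K =>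
  (hA K).trans <| (cdMeasure_le_card_coe_mul_mul_card_centralizer_sup hA hB).trans <|
    Nat.mul_le_mul_right _ (card_coe_mul_le_card_sup A B)

theorem coe_mul_eq_sup_of_mem_CD (hA : A ∈ CD G) (hB : B ∈ CD G) :
    (A : Set G) * (B : Set G) = (A ⊔ B : Subgroup G) := by
  refine (Set.toFinite _).eq_of_subset_of_card_le (coe_mul_subset_coe_sup A B) ?_
  refine Nat.le_of_mul_le_mul_right ?_
    (Nat.card_pos (α := centralizer ((A ⊔ B : Subgroup G) : Set G)))
  calc _ = cdMeasure (A ⊔ B) := rfl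
    _ ≤ cdMeasure A := hA _
    _ ≤ _ := cdMeasure_le_card_coe_mul_mul_card_centralizer_sup hA hB

end CDLattice

theorem mem_of_inv_mem_coe_mul_map_conj {G : Type*} [Group G] {H : Subgroup G} {k : G}
    (hk : k⁻¹ ∈ (H : Set G) * (H.map (MulAut.conj k).toMonoidHom : Set G)) : k ∈ H := by
  obtain ⟨u, hu, _, ⟨v, hv, rfl⟩, huv⟩ := hk
  simp only [MulEquiv.coe_toMonoidHom, MulAut.conj_apply] at huv
  have hukv : u * k * v = 1 := by simpa [mul_assoc] using congrArg (· * k) huv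
  rw [show k = u⁻¹ * (u * k * v) * v⁻¹ by group, hukv, mul_one]
  exact mul_mem (inv_mem hu) (inv_mem hv)

theorem stmt4_general {G : Type*} [Group G] [Fintype G] (H K : Subgroup G)
    (hH : H ∈ CD G) (hlt : H < K)
    (hcov : ¬ ∃ R ∈ CD G, H < R ∧ R < K) :
    ∀ k ∈ K, ∀ h ∈ H, k * h * k⁻¹ ∈ H := by
  intro k hk h hh
  set B := H.map (MulAut.conj k).toMonoidHom
  have hB : B ∈ CD G := fun R => (hH R).trans (cdMeasure_map_mulEquiv _ H).ge
  have hBK : B ≤ K := map_le_iff_le_comap.2 fun x hx => by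
    simpa using mul_mem (mul_mem hk (hlt.le hx)) (inv_mem hk)
  have hsup : H ⊔ B = H ∨ H ⊔ B = K := by
    by_contra! hne
    exact hcov ⟨H ⊔ B, sup_mem_CD hH hB, lt_of_le_of_ne le_sup_left hne.1.symm,
      lt_of_le_of_ne (sup_le hlt.le hBK) hne.2⟩
  rcases hsup with hsup | hsup
  · exact le_sup_right.trans hsup.le (mem_map_of_mem _ hh)
  · have hkH : k ∈ H := mem_of_inv_mem_coe_mul_map_conj <| by
      rw [coe_mul_eq_sup_of_mem_CD hH hB, hsup]
      exact inv_mem hk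
    exact mul_mem (mul_mem hkH hh) (inv_mem hkH)

theorem stmt4 {G : Type*} [Group G] [Fintype G] (H K : Subgroup G)
    (hH : H ∈ CD G) (hK : K ∈ CD G) (hlt : H < K)
    (hcov : ¬ ∃ R ∈ CD G, H < R ∧ R < K) :
    ∀ k ∈ K, ∀ h ∈ H, k * h * k⁻¹ ∈ H :=
  stmt4_general H K hH hlt hcov
end

section
/- Let G₁ and G₂ be finite groups and G = G₁ × G₂ their direct product. Then CD(G) = CD(G₁) × CD(G₂); that is, a subgroup H ≤ G₁ × G₂ lies in CD(G₁ × G₂) if and only if H = H₁ × H₂ for some H₁ ∈ CD(G₁) and H₂ ∈ CD(G₂). -/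
open Pointwise

section aux

variable {G₁ G₂ : Type*} [Group G₁] [Group G₂]

lemma cardProd (H₁ : Subgroup G₁) (H₂ : Subgroup G₂) :
    Nat.card (H₁.prod H₂) = Nat.card H₁ * Nat.card H₂ := by
  rw [Nat.card_congr (Subgroup.prodEquiv H₁ H₂).toEquiv, Nat.card_prod]

lemma mapFstProd (H₁ : Subgroup G₁) (H₂ : Subgroup G₂) :
    (H₁.prod H₂).map (MonoidHom.fst G₁ G₂) = H₁ := by
  ext x
  simp only [Subgroup.mem_map]
  constructor
  · rintro ⟨⟨a, b⟩, ⟨h1, _⟩, rfl⟩; exact h1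
  · intro hx; exact ⟨(x, 1), ⟨hx, one_mem _⟩, rfl⟩

lemma mapSndProd (H₁ : Subgroup G₁) (H₂ : Subgroup G₂) :
    (H₁.prod H₂).map (MonoidHom.snd G₁ G₂) = H₂ := by
  ext x
  simp only [Subgroup.mem_map]
  constructor
  · rintro ⟨⟨a, b⟩, ⟨_, h2⟩, rfl⟩; exact h2
  · intro hx; exact ⟨(1, x), ⟨one_mem _, hx⟩, rfl⟩

lemma centEq (H : Subgroup (G₁ × G₂)) :
    Subgroup.centralizer (H : Set (G₁ × G₂)) =
      (Subgroup.centralizer ((H.map (MonoidHom.fst G₁ G₂)) : Set G₁)).prod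
      (Subgroup.centralizer ((H.map (MonoidHom.snd G₁ G₂)) : Set G₂)) := by
  ext ⟨x, y⟩
  simp only [Subgroup.mem_centralizer_iff, Subgroup.mem_prod, SetLike.mem_coe,
    Subgroup.mem_map]
  constructor
  · intro h
    constructor
    · rintro a ⟨p, hp, rfl⟩
      exact congrArg Prod.fst (h p hp)
    · rintro b ⟨p, hp, rfl⟩
      exact congrArg Prod.snd (h p hp)
  · rintro ⟨h1, h2⟩ p hp
    exact Prod.ext (h1 p.1 ⟨p, hp, rfl⟩) (h2 p.2 ⟨p, hp, rfl⟩)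

lemma cdProd (H₁ : Subgroup G₁) (H₂ : Subgroup G₂) :
    cdMeasure (H₁.prod H₂) = cdMeasure H₁ * cdMeasure H₂ := by
  unfold cdMeasure
  rw [centEq, mapFstProd, mapSndProd, cardProd, cardProd]
  ring

lemma leProd (H : Subgroup (G₁ × G₂)) :
    H ≤ (H.map (MonoidHom.fst G₁ G₂)).prod (H.map (MonoidHom.snd G₁ G₂)) := by
  intro p hp
  exact ⟨⟨p, hp, rfl⟩, ⟨p, hp, rfl⟩⟩

variable [Fintype G₁] [Fintype G₂]

lemma cdLeProd (H : Subgroup (G₁ × G₂)) :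
    cdMeasure H ≤
      cdMeasure ((H.map (MonoidHom.fst G₁ G₂)).prod (H.map (MonoidHom.snd G₁ G₂))) := by
  unfold cdMeasure
  have h1 : (Subgroup.centralizer (H : Set (G₁ × G₂))) =
      Subgroup.centralizer
        (((H.map (MonoidHom.fst G₁ G₂)).prod (H.map (MonoidHom.snd G₁ G₂)) : Subgroup (G₁ × G₂)) :
          Set (G₁ × G₂)) := by
    rw [centEq, centEq ((H.map (MonoidHom.fst G₁ G₂)).prod (H.map (MonoidHom.snd G₁ G₂))),
      mapFstProd, mapSndProd]
  rw [h1]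
  exact Nat.mul_le_mul_right _ (Subgroup.card_le_of_le (leProd H))

end aux

theorem stmt6 {G₁ G₂ : Type*} [Group G₁] [Group G₂] [Fintype G₁] [Fintype G₂]
    (H : Subgroup (G₁ × G₂)) :
    H ∈ CD (G₁ × G₂) ↔
      ∃ H₁ ∈ CD G₁, ∃ H₂ ∈ CD G₂, H = H₁.prod H₂ := by
  obtain ⟨A, hA⟩ := Finite.exists_max (fun K : Subgroup G₁ => cdMeasure K)
  obtain ⟨B, hB⟩ := Finite.exists_max (fun K : Subgroup G₂ => cdMeasure K)
  have posA : 0 < cdMeasure A := Nat.mul_pos Nat.card_pos Nat.card_pos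
  have posB : 0 < cdMeasure B := Nat.mul_pos Nat.card_pos Nat.card_pos
  constructor
  · intro hH
    set H₁ := H.map (MonoidHom.fst G₁ G₂) with hH₁
    set H₂ := H.map (MonoidHom.snd G₁ G₂) with hH₂
    have key1 : cdMeasure H ≤ cdMeasure H₁ * cdMeasure H₂ := by
      rw [← cdProd]; exact cdLeProd H
    have key2 : cdMeasure H₁ * cdMeasure H₂ ≤ cdMeasure A * cdMeasure B :=
      Nat.mul_le_mul (hA H₁) (hB H₂)
    have key3 : cdMeasure A * cdMeasure B ≤ cdMeasure H := by
      rw [← cdProd]; exact hH (A.prod B)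
    have eq1 : cdMeasure H = cdMeasure H₁ * cdMeasure H₂ :=
      le_antisymm key1 (by rw [← cdProd]; exact hH (H₁.prod H₂))
    have eq2 : cdMeasure H₁ * cdMeasure H₂ = cdMeasure A * cdMeasure B :=
      le_antisymm key2 (le_trans key3 key1)
    -- each factor attains the max
    have hm1 : cdMeasure H₁ = cdMeasure A := by
      refine le_antisymm (hA H₁) ?_
      have h2 : cdMeasure H₂ ≤ cdMeasure B := hB H₂
      by_contra hlt
      push_neg at hlt
      have : cdMeasure H₁ * cdMeasure H₂ < cdMeasure A * cdMeasure B :=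
        Nat.mul_lt_mul_of_lt_of_le hlt h2 posB
      omega
    have hm2 : cdMeasure H₂ = cdMeasure B := by
      refine le_antisymm (hB H₂) ?_
      by_contra hlt
      push_neg at hlt
      have : cdMeasure H₁ * cdMeasure H₂ < cdMeasure A * cdMeasure B :=
        Nat.mul_lt_mul_of_le_of_lt (hA H₁) hlt posA
      omega
    refine ⟨H₁, fun K => (hA K).trans hm1.ge, H₂, fun K => (hB K).trans hm2.ge, ?_⟩
    -- from equality of measures and centralizers, equality of cards
    have hcent : (Subgroup.centralizer (H : Set (G₁ × G₂))) =
        Subgroup.centralizer ((H₁.prod H₂ : Subgroup (G₁ × G₂)) : Set (G₁ × G₂)) := by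
      rw [centEq H, centEq (H₁.prod H₂), mapFstProd, mapSndProd]
    have hmeq : cdMeasure H = cdMeasure (H₁.prod H₂) := by rw [cdProd]; exact eq1
    have hcpos : 0 < Nat.card (Subgroup.centralizer (H : Set (G₁ × G₂))) := Nat.card_pos
    have hcard : Nat.card (H₁.prod H₂) ≤ Nat.card H := by
      unfold cdMeasure at hmeq
      rw [← hcent] at hmeq
      exact Nat.le_of_mul_le_mul_right hmeq.ge hcpos
    exact Subgroup.eq_of_le_of_card_ge (leProd H) hcard
  · rintro ⟨H₁, h1, H₂, h2, rfl⟩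
    intro K
    calc cdMeasure K
        ≤ cdMeasure ((K.map (MonoidHom.fst G₁ G₂)).prod (K.map (MonoidHom.snd G₁ G₂))) :=
          cdLeProd K
      _ = cdMeasure (K.map (MonoidHom.fst G₁ G₂)) * cdMeasure (K.map (MonoidHom.snd G₁ G₂)) :=
          cdProd _ _
      _ ≤ cdMeasure H₁ * cdMeasure H₂ := Nat.mul_le_mul (h1 _) (h2 _)
      _ = cdMeasure (H₁.prod H₂) := (cdProd H₁ H₂).symm
end

section
/- Let G be a finite group that is CD-minimal (1 ∈ CD(G) and G is indecomposable) but not CD-simple (CD(G) ≠ {1, G}). If A is an atom of CD(G) and B is a coatom of CD(G), then A ≤ B. -/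
open Pointwise

namespace CDAux

open Subgroup

variable {G : Type*} [Group G] [Fintype G]

/-- card of a set product of two subgroups times card of intersection. -/
lemma card_set_mul_inf (H K : Subgroup G) :
    Nat.card (↑H * ↑K : Set G) * Nat.card ↥(H ⊓ K) = Nat.card H * Nat.card K := by
  classical
  have hset : (↑H * ↑K : Set G)
      = (QuotientGroup.mk : G → G ⧸ K) ⁻¹' ((QuotientGroup.mk : G → G ⧸ K) '' ↑H) := by
    ext g
    constructor
    · rintro ⟨h, hh, k, hk, rfl⟩
      exact ⟨h, hh, (QuotientGroup.mk_mul_of_mem h hk).symm⟩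
    · rintro ⟨h, hh, hq⟩
      have hk : h⁻¹ * g ∈ K := QuotientGroup.eq.mp hq
      exact ⟨h, hh, h⁻¹ * g, hk, by group⟩
  have hpre : Nat.card ((QuotientGroup.mk : G → G ⧸ K) ⁻¹'
        ((QuotientGroup.mk : G → G ⧸ K) '' (H : Set G)))
      = Nat.card K * Nat.card ((QuotientGroup.mk : G → G ⧸ K) '' (H : Set G)) := by
    rw [Nat.card_congr (QuotientGroup.preimageMkEquivSubgroupProdSet K _), Nat.card_prod]
  have hsub : K.subgroupOf H = (H ⊓ K).subgroupOf H := by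
    ext x
    simp [Subgroup.mem_subgroupOf, x.2]
  have hcard_sub : Nat.card (K.subgroupOf H) = Nat.card ↥(H ⊓ K) := by
    rw [hsub]
    exact Nat.card_congr (Subgroup.subgroupOfEquivOfLe inf_le_left).toEquiv
  have himg : Nat.card ((QuotientGroup.mk : G → G ⧸ K) '' (H : Set G)) * Nat.card ↥(H ⊓ K)
      = Nat.card H := by
    have e : (H ⧸ (K.subgroupOf H)) ≃
        ((QuotientGroup.mk : G → G ⧸ K) '' (H : Set G)) := by
      refine Equiv.ofBijective (fun q => Quotient.liftOn' q
        (fun h => (⟨QuotientGroup.mk (h : G), ⟨(h : G), h.2, rfl⟩⟩ :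
          ((QuotientGroup.mk : G → G ⧸ K) '' (H : Set G))))
        ?_) ⟨?_, ?_⟩
      · intro a b hab
        have h1 : (a : G)⁻¹ * (b : G) ∈ K := by
          have := QuotientGroup.leftRel_apply.mp hab
          exact (Subgroup.mem_subgroupOf.mp this)
        exact Subtype.ext (QuotientGroup.eq.mpr h1)
      · intro q₁ q₂
        refine Quotient.inductionOn₂' q₁ q₂ (fun a b h => ?_)
        have h1 : QuotientGroup.mk (a : G) = (QuotientGroup.mk (b : G) : G ⧸ K) :=
          congrArg Subtype.val h
        have h2 : (a : G)⁻¹ * (b : G) ∈ K := QuotientGroup.eq.mp h1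
        exact Quotient.sound' (QuotientGroup.leftRel_apply.mpr
          (Subgroup.mem_subgroupOf.mpr (by simpa using h2)))
      · rintro ⟨q, x, hx, rfl⟩
        exact ⟨Quotient.mk'' ⟨x, hx⟩, rfl⟩
    have h1 := Subgroup.card_eq_card_quotient_mul_card_subgroup (K.subgroupOf H)
    rw [hcard_sub, Nat.card_congr e] at h1
    exact h1.symm
  calc Nat.card (↑H * ↑K : Set G) * Nat.card ↥(H ⊓ K)
      = (Nat.card K * Nat.card ((QuotientGroup.mk : G → G ⧸ K) '' (H : Set G)))
        * Nat.card ↥(H ⊓ K) := by rw [hset, hpre]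
    _ = Nat.card K * (Nat.card ((QuotientGroup.mk : G → G ⧸ K) '' (H : Set G))
        * Nat.card ↥(H ⊓ K)) := by rw [mul_assoc]
    _ = Nat.card K * Nat.card H := by rw [himg]
    _ = Nat.card H * Nat.card K := mul_comm _ _

lemma centralizer_sup (H K : Subgroup G) :
    Subgroup.centralizer (↑(H ⊔ K) : Set G)
      = Subgroup.centralizer (H : Set G) ⊓ Subgroup.centralizer (K : Set G) := by
  refine le_antisymm (le_inf (centralizer_le (SetLike.coe_subset_coe.mpr le_sup_left))
    (centralizer_le (SetLike.coe_subset_coe.mpr le_sup_right))) ?_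
  intro x hx
  obtain ⟨hx1, hx2⟩ := Subgroup.mem_inf.mp hx
  rw [mem_centralizer_iff]
  intro y hy
  have hsup : H ⊔ K ≤ Subgroup.centralizer {x} := by
    refine sup_le (fun h hh => ?_) (fun k hk => ?_)
    · exact mem_centralizer_singleton_iff.mpr ((mem_centralizer_iff.mp hx1) h hh)
    · exact mem_centralizer_singleton_iff.mpr ((mem_centralizer_iff.mp hx2) k hk)
  exact mem_centralizer_singleton_iff.mp (hsup hy)

lemma centralizer_coe_bot : Subgroup.centralizer ((⊥ : Subgroup G) : Set G) = ⊤ := by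
  ext x
  simp [mem_centralizer_iff]

lemma cdMeasure_bot : cdMeasure (⊥ : Subgroup G) = Nat.card G := by
  rw [cdMeasure, centralizer_coe_bot, Subgroup.card_bot, Subgroup.card_top, one_mul]

variable (hbot : (⊥ : Subgroup G) ∈ CD G)
include hbot

lemma cd_le (K : Subgroup G) : cdMeasure K ≤ Nat.card G := by
  have := hbot K
  rwa [cdMeasure_bot] at this

lemma mem_CD_iff {X : Subgroup G} : X ∈ CD G ↔ cdMeasure X = Nat.card G := by
  constructor
  · intro hX
    refine le_antisymm (cd_le hbot X) ?_
    have := hX ⊥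
    rwa [cdMeasure_bot] at this
  · intro hX K
    rw [hX]
    exact cd_le hbot K

lemma m_eq {X : Subgroup G} (hX : X ∈ CD G) :
    Nat.card X * Nat.card (Subgroup.centralizer (X : Set G)) = Nat.card G :=
  (mem_CD_iff hbot).mp hX

lemma top_mem_CD : (⊤ : Subgroup G) ∈ CD G := by
  rw [mem_CD_iff hbot]
  have h1 : 0 < Nat.card (Subgroup.centralizer ((⊤ : Subgroup G) : Set G)) := Nat.card_pos
  have h2 := cd_le hbot (⊤ : Subgroup G)
  rw [cdMeasure, Subgroup.card_top] at h2 ⊢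
  have h3 : Nat.card G * 1 ≤ Nat.card G * Nat.card
      (Subgroup.centralizer ((⊤ : Subgroup G) : Set G)) := Nat.mul_le_mul_left _ h1
  omega

lemma centralizer_coe_top : Subgroup.centralizer ((⊤ : Subgroup G) : Set G) = ⊥ := by
  apply Subgroup.eq_bot_of_card_eq
  have h2 := cd_le hbot (⊤ : Subgroup G)
  rw [cdMeasure, Subgroup.card_top] at h2
  have h1 : 0 < Nat.card (Subgroup.centralizer ((⊤ : Subgroup G) : Set G)) := Nat.card_pos
  have hn : 0 < Nat.card G := Nat.card_pos
  nlinarith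

/-- double centralizer for CD members. -/
lemma centralizer_CD {X : Subgroup G} (hX : X ∈ CD G) :
    Subgroup.centralizer ((X : Subgroup G) : Set G) ∈ CD G ∧
      Subgroup.centralizer ((Subgroup.centralizer ((X : Subgroup G) : Set G) : Subgroup G) : Set G)
        = X := by
  have hle : X ≤ Subgroup.centralizer
      ((Subgroup.centralizer ((X : Subgroup G) : Set G) : Subgroup G) : Set G) :=
    Subgroup.le_centralizer_iff.mp le_rfl
  have hcard : Nat.card X ≤ Nat.card (Subgroup.centralizer
      ((Subgroup.centralizer ((X : Subgroup G) : Set G) : Subgroup G) : Set G)) :=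
    Subgroup.card_le_of_le hle
  have hm := m_eq hbot hX
  have hub := cd_le hbot (Subgroup.centralizer ((X : Subgroup G) : Set G))
  rw [cdMeasure] at hub
  have hge : Nat.card G ≤ Nat.card (Subgroup.centralizer ((X : Subgroup G) : Set G)) *
      Nat.card (Subgroup.centralizer
      ((Subgroup.centralizer ((X : Subgroup G) : Set G) : Subgroup G) : Set G)) := by
    calc Nat.card G = Nat.card X * Nat.card (Subgroup.centralizer ((X : Subgroup G) : Set G)) :=
          hm.symm
      _ ≤ _ := by
          rw [mul_comm]
          exact Nat.mul_le_mul_left _ hcard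
  have heq : Nat.card (Subgroup.centralizer ((X : Subgroup G) : Set G)) *
      Nat.card (Subgroup.centralizer
      ((Subgroup.centralizer ((X : Subgroup G) : Set G) : Subgroup G) : Set G)) = Nat.card G :=
    le_antisymm hub hge
  constructor
  · rw [mem_CD_iff hbot, cdMeasure]
    exact heq
  · have hpos : 0 < Nat.card (Subgroup.centralizer ((X : Subgroup G) : Set G)) := Nat.card_pos
    have hcc : Nat.card (Subgroup.centralizer
        ((Subgroup.centralizer ((X : Subgroup G) : Set G) : Subgroup G) : Set G))
        = Nat.card X := by
      have := heq.trans hm.symm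
      rw [mul_comm (Nat.card X) _] at this
      exact Nat.eq_of_mul_eq_mul_left hpos this
    exact (Subgroup.eq_of_le_of_card_ge hle hcc.le).symm

/-- the structural lemma: CD is closed under sup and inf, and card is "modular". -/
lemma sup_inf_CD {H K : Subgroup G} (hH : H ∈ CD G) (hK : K ∈ CD G) :
    H ⊓ K ∈ CD G ∧ H ⊔ K ∈ CD G ∧
      Nat.card ↥(H ⊔ K) * Nat.card ↥(H ⊓ K) = Nat.card H * Nat.card K := by
  classical
  set n := Nat.card G with hn
  have hnpos : 0 < n := Nat.card_pos
  have e1 := card_set_mul_inf H K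
  have e2 : Nat.card (↑H * ↑K : Set G) ≤ Nat.card ↥(H ⊔ K) := by
    have hsub : (↑H * ↑K : Set G) ⊆ (↑(H ⊔ K) : Set G) := by
      rintro x ⟨h, hh, k, hk, rfl⟩
      exact mul_mem (Subgroup.mem_sup_left hh) (Subgroup.mem_sup_right hk)
    have := Nat.card_mono (Set.toFinite _) hsub
    simpa using this
  have e3 := centralizer_sup H K
  have e4 := card_set_mul_inf (Subgroup.centralizer (H : Set G))
    (Subgroup.centralizer (K : Set G))
  have e5 : Nat.card (↑(Subgroup.centralizer (H : Set G)) *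
        ↑(Subgroup.centralizer (K : Set G)) : Set G)
      ≤ Nat.card (Subgroup.centralizer ((H ⊓ K : Subgroup G) : Set G)) := by
    have hsub : (↑(Subgroup.centralizer (H : Set G)) *
        ↑(Subgroup.centralizer (K : Set G)) : Set G)
        ⊆ (↑(Subgroup.centralizer ((H ⊓ K : Subgroup G) : Set G)) : Set G) := by
      rintro x ⟨h, hh, k, hk, rfl⟩
      have h1 : Subgroup.centralizer (H : Set G) ≤
          Subgroup.centralizer ((H ⊓ K : Subgroup G) : Set G) :=
        centralizer_le (SetLike.coe_subset_coe.mpr inf_le_left)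
      have h2 : Subgroup.centralizer (K : Set G) ≤
          Subgroup.centralizer ((H ⊓ K : Subgroup G) : Set G) :=
        centralizer_le (SetLike.coe_subset_coe.mpr inf_le_right)
      exact mul_mem (h1 hh) (h2 hk)
    have := Nat.card_mono (Set.toFinite _) hsub
    simpa using this
  -- abbreviations
  set a := Nat.card H
  set b := Nat.card K
  set ca := Nat.card (Subgroup.centralizer (H : Set G))
  set cb := Nat.card (Subgroup.centralizer (K : Set G))
  set s := Nat.card ↥(H ⊔ K)
  set i := Nat.card ↥(H ⊓ K)
  set cs := Nat.card (Subgroup.centralizer ((H ⊔ K : Subgroup G) : Set G))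
  set ci := Nat.card (Subgroup.centralizer ((H ⊓ K : Subgroup G) : Set G))
  have hmH : a * ca = n := m_eq hbot hH
  have hmK : b * cb = n := m_eq hbot hK
  have hcs : cs = Nat.card ↥(Subgroup.centralizer (H : Set G) ⊓
      Subgroup.centralizer (K : Set G)) := by rw [← e3]
  -- key inequality chain
  have key1 : a * b ≤ s * i := by
    calc a * b = Nat.card (↑H * ↑K : Set G) * i := e1.symm
      _ ≤ s * i := Nat.mul_le_mul_right _ e2
  have key2 : ca * cb ≤ ci * cs := by
    calc ca * cb = Nat.card (↑(Subgroup.centralizer (H : Set G)) *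
          ↑(Subgroup.centralizer (K : Set G)) : Set G) *
          Nat.card ↥(Subgroup.centralizer (H : Set G) ⊓ Subgroup.centralizer (K : Set G)) :=
        e4.symm
      _ ≤ ci * cs := by
          rw [hcs]
          exact Nat.mul_le_mul_right _ e5
  have hms : s * cs ≤ n := by
    have := cd_le hbot (H ⊔ K)
    rwa [cdMeasure] at this
  have hmi : i * ci ≤ n := by
    have := cd_le hbot (H ⊓ K)
    rwa [cdMeasure] at this
  have hbig : n * n ≤ (s * cs) * (i * ci) := by
    calc n * n = (a * ca) * (b * cb) := by rw [hmH, hmK]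
      _ = (a * b) * (ca * cb) := by ring
      _ ≤ (s * i) * (ci * cs) := Nat.mul_le_mul key1 key2
      _ = (s * cs) * (i * ci) := by ring
  have hsup_eq : s * cs = n := by
    have h1 : n * n ≤ (s * cs) * n := le_trans hbig (Nat.mul_le_mul_left _ hmi)
    have h2 : n ≤ s * cs := Nat.le_of_mul_le_mul_right (by linarith [h1]) hnpos
    exact le_antisymm hms h2
  have hinf_eq : i * ci = n := by
    have h1 : n * n ≤ n * (i * ci) := le_trans hbig (Nat.mul_le_mul_right _ hms)
    have h2 : n ≤ i * ci := Nat.le_of_mul_le_mul_left h1 hnpos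
    exact le_antisymm hmi h2
  have hmem_inf : H ⊓ K ∈ CD G := by rw [mem_CD_iff hbot, cdMeasure]; exact hinf_eq
  have hmem_sup : H ⊔ K ∈ CD G := by rw [mem_CD_iff hbot, cdMeasure]; exact hsup_eq
  refine ⟨hmem_inf, hmem_sup, ?_⟩
  -- extract the card equality
  have hXY : (s * i) * (cs * ci) = (a * b) * (ca * cb) := by
    calc (s * i) * (cs * ci) = (s * cs) * (i * ci) := by ring
      _ = n * n := by rw [hsup_eq, hinf_eq]
      _ = (a * ca) * (b * cb) := by rw [hmH, hmK]
      _ = (a * b) * (ca * cb) := by ring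
  have habpos : 0 < a * b := Nat.mul_pos Nat.card_pos Nat.card_pos
  have key2' : ca * cb ≤ cs * ci := by rw [mul_comm cs ci]; exact key2
  have h1 : (a * b) * (cs * ci) ≤ (s * i) * (cs * ci) := by
    have hcspos : 0 < cs * ci := Nat.mul_pos Nat.card_pos Nat.card_pos
    exact Nat.mul_le_mul_right _ key1
  have h2 : (a * b) * (ca * cb) ≤ (a * b) * (cs * ci) := Nat.mul_le_mul_left _ key2'
  have h3 : (s * i) * (cs * ci) ≤ (a * b) * (cs * ci) := by
    rw [hXY]; exact h2
  have h4 : s * i = a * b := by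
    have hcspos : 0 < cs * ci := Nat.mul_pos Nat.card_pos Nat.card_pos
    exact le_antisymm (Nat.le_of_mul_le_mul_right h3 hcspos)
      (Nat.le_of_mul_le_mul_right h1 hcspos)
  exact h4

omit hbot in
/-- From a full set-product of mutually centralizing subgroups, get normality etc. -/
lemma decomp {X Y : Subgroup G} (hcent : Y ≤ Subgroup.centralizer (X : Set G))
    (huniv : (↑X * ↑Y : Set G) = Set.univ) :
    X.Normal ∧ Y.Normal ∧ X ⊔ Y = ⊤ := by
  have hcent' : X ≤ Subgroup.centralizer (Y : Set G) := Subgroup.le_centralizer_iff.mp hcent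
  have hdecomp : ∀ g : G, ∃ x ∈ X, ∃ y ∈ Y, x * y = g := by
    intro g
    have : g ∈ (↑X * ↑Y : Set G) := by rw [huniv]; exact Set.mem_univ g
    exact this
  refine ⟨⟨fun m hm g => ?_⟩, ⟨fun m hm g => ?_⟩, ?_⟩
  · obtain ⟨x, hx, y, hy, rfl⟩ := hdecomp g
    have hym : y * m * y⁻¹ = m := by
      have h1 : m * y = y * m := (mem_centralizer_iff.mp (hcent hy)) m hm
      rw [← h1]; group
    have : (x * y) * m * (x * y)⁻¹ = x * (y * m * y⁻¹) * x⁻¹ := by group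
    rw [this, hym]
    exact mul_mem (mul_mem hx hm) (inv_mem hx)
  · obtain ⟨x, hx, y, hy, rfl⟩ := hdecomp g
    have hyin : y * m * y⁻¹ ∈ Y := mul_mem (mul_mem hy hm) (inv_mem hy)
    have hxm : x * (y * m * y⁻¹) * x⁻¹ = y * m * y⁻¹ := by
      have h1 : (y * m * y⁻¹) * x = x * (y * m * y⁻¹) :=
        (mem_centralizer_iff.mp (hcent' hx)) _ hyin
      rw [← h1]; group
    have : (x * y) * m * (x * y)⁻¹ = x * (y * m * y⁻¹) * x⁻¹ := by group
    rw [this, hxm]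
    exact hyin
  · rw [eq_top_iff]
    intro g _
    obtain ⟨x, hx, y, hy, rfl⟩ := hdecomp g
    exact mul_mem (Subgroup.mem_sup_left hx) (Subgroup.mem_sup_right hy)

omit hbot in
lemma set_eq_univ_of_card {s : Set G} (h : Nat.card ↥s = Nat.card G) : s = Set.univ := by
  apply Set.eq_of_subset_of_ncard_le (Set.subset_univ s)
  rw [Set.ncard_univ, ← Nat.card_coe_set_eq, h]

omit hbot in
lemma mul_set_univ {X Y : Subgroup G} (hinf : X ⊓ Y = ⊥)
    (hcard : Nat.card X * Nat.card Y = Nat.card G) :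
    (↑X * ↑Y : Set G) = Set.univ := by
  have h1 := card_set_mul_inf X Y
  rw [hinf, Subgroup.card_bot, mul_one, hcard] at h1
  exact set_eq_univ_of_card h1

/-- conjugate of a subgroup. -/
noncomputable def conjS (g : G) (H : Subgroup G) : Subgroup G :=
  H.map (MulAut.conj g).toMonoidHom

omit hbot in
lemma mem_conjS {g x : G} {H : Subgroup G} :
    x ∈ conjS g H ↔ ∃ h ∈ H, g * h * g⁻¹ = x := by
  simp [conjS, Subgroup.mem_map, MulAut.conj_apply]

omit hbot in
lemma card_conjS (g : G) (H : Subgroup G) : Nat.card (conjS g H) = Nat.card H :=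
  (Nat.card_congr (Subgroup.equivMapOfInjective H _
    ((MulAut.conj g).injective)).toEquiv).symm

omit hbot in
lemma centralizer_conjS (g : G) (H : Subgroup G) :
    Subgroup.centralizer ((conjS g H : Subgroup G) : Set G)
      = conjS g (Subgroup.centralizer (H : Set G)) := by
  ext x
  rw [mem_centralizer_iff, mem_conjS]
  constructor
  · intro hx
    refine ⟨g⁻¹ * x * g, ?_, by group⟩
    rw [mem_centralizer_iff]
    intro h hh
    have e := hx (g * h * g⁻¹) (by exact mem_conjS.mpr ⟨h, hh, rfl⟩)
    have e2 := congrArg (fun z => g⁻¹ * z * g) e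
    simp only [mul_assoc, inv_mul_cancel_left, inv_mul_cancel, mul_one] at e2
    simpa [mul_assoc] using e2
  · rintro ⟨c, hc, rfl⟩
    intro y hy
    obtain ⟨h, hh, rfl⟩ := mem_conjS.mp hy
    have e : h * c = c * h := (mem_centralizer_iff.mp hc) h hh
    calc g * h * g⁻¹ * (g * c * g⁻¹) = g * (h * c) * g⁻¹ := by group
      _ = g * (c * h) * g⁻¹ := by rw [e]
      _ = g * c * g⁻¹ * (g * h * g⁻¹) := by group

lemma conjS_mem_CD {H : Subgroup G} (hH : H ∈ CD G) (g : G) : conjS g H ∈ CD G := by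
  rw [mem_CD_iff hbot, cdMeasure, centralizer_conjS, card_conjS, card_conjS]
  exact m_eq hbot hH

omit hbot in
lemma conjS_eq_of_mem {g : G} {H : Subgroup G} (hg : g ∈ H) : conjS g H = H := by
  ext x
  rw [mem_conjS]
  constructor
  · rintro ⟨h, hh, rfl⟩
    exact mul_mem (mul_mem hg hh) (inv_mem hg)
  · intro hx
    exact ⟨g⁻¹ * x * g, mul_mem (mul_mem (inv_mem hg) hx) hg, by group⟩

omit hbot in
lemma conjS_eq_of_mul_univ {g : G} {H : Subgroup G}
    (huniv : (↑H * ↑(conjS g H) : Set G) = Set.univ) : conjS g H = H := by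
  have : g⁻¹ ∈ (↑H * ↑(conjS g H) : Set G) := by rw [huniv]; exact Set.mem_univ _
  obtain ⟨a, ha, b', hb', heq⟩ := this
  obtain ⟨b, hb, rfl⟩ := mem_conjS.mp hb'
  -- heq : a * (g * b * g⁻¹) = g⁻¹
  have h1 : a * g * b = 1 := by
    have := congrArg (fun z => z * g) heq
    simpa [mul_assoc] using this
  have hgmem : g ∈ H := by
    have : g = a⁻¹ * b⁻¹ := by
      have h2 : a * g = b⁻¹ := by
        have := congrArg (fun z => z * b⁻¹) h1
        simpa [mul_assoc] using this
      rw [← h2]; group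
    rw [this]
    exact mul_mem (inv_mem ha) (inv_mem hb)
  exact conjS_eq_of_mem hgmem

omit hbot in
lemma normal_of_conjS {H : Subgroup G} (h : ∀ g : G, conjS g H = H) : H.Normal := by
  refine ⟨fun m hm g => ?_⟩
  have : g * m * g⁻¹ ∈ conjS g H := mem_conjS.mpr ⟨m, hm, rfl⟩
  rwa [h g] at this

end CDAux

open CDAux Subgroup

theorem stmt12 {G : Type*} [Group G] [Fintype G]
    (hbot : (⊥ : Subgroup G) ∈ CD G)
    (hindec : ¬ ∃ H K : Subgroup G, H ≠ ⊥ ∧ K ≠ ⊥ ∧ H.Normal ∧ K.Normal ∧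
        H ⊓ K = ⊥ ∧ H ⊔ K = ⊤)
    (hnotsimple : CD G ≠ {⊥, ⊤})
    (A B : Subgroup G)
    (hA : A ∈ CD G ∧ A ≠ ⊥ ∧ ∀ X ∈ CD G, X ≠ ⊥ → X ≤ A → X = A)
    (hB : B ∈ CD G ∧ B ≠ ⊤ ∧ ∀ X ∈ CD G, X ≠ ⊤ → B ≤ X → X = B) :
    A ≤ B := by
  classical
  by_contra hAB
  obtain ⟨hAcd, hAne, hAmin⟩ := hA
  obtain ⟨hBcd, hBne, hBmax⟩ := hB
  have hTop : (⊤ : Subgroup G) ∈ CD G := top_mem_CD hbot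
  have hZ : Subgroup.centralizer ((⊤ : Subgroup G) : Set G) = ⊥ := centralizer_coe_top hbot
  -- B ≠ ⊥
  have hBne' : B ≠ ⊥ := by
    intro h
    apply hnotsimple
    ext X
    simp only [Set.mem_insert_iff, Set.mem_singleton_iff]
    constructor
    · intro hX
      by_cases hXt : X = ⊤
      · right; exact hXt
      · left
        have := hBmax X hX hXt (h ▸ bot_le)
        rw [this, h]
    · rintro (rfl | rfl)
      · exact hbot
      · exact hTop
  -- A ≠ ⊤
  have hAnt : A ≠ ⊤ := by
    intro h
    apply hnotsimple
    ext X
    simp only [Set.mem_insert_iff, Set.mem_singleton_iff]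
    constructor
    · intro hX
      by_cases hXb : X = ⊥
      · left; exact hXb
      · right
        have := hAmin X hX hXb (h ▸ le_top)
        rw [this, h]
    · rintro (rfl | rfl)
      · exact hbot
      · exact hTop
  -- A ⊓ B = ⊥ and A ⊔ B = ⊤
  have s1 : A ⊓ B = ⊥ := by
    by_cases h : A ⊓ B = ⊥
    · exact h
    · exfalso
      have := hAmin (A ⊓ B) (sup_inf_CD hbot hAcd hBcd).1 h inf_le_left
      exact hAB (inf_eq_left.mp this)
  have s2 : A ⊔ B = ⊤ := by
    by_cases h : A ⊔ B = ⊤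
    · exact h
    · exfalso
      have := hBmax (A ⊔ B) (sup_inf_CD hbot hAcd hBcd).2.1 h le_sup_right
      exact hAB (sup_eq_right.mp this)
  have hnpos : 0 < Nat.card G := Nat.card_pos
  have s4 : Nat.card A * Nat.card B = Nat.card G := by
    have := (sup_inf_CD hbot hAcd hBcd).2.2
    rw [s1, s2, Subgroup.card_top, Subgroup.card_bot, mul_one] at this
    exact this.symm
  have hApos : 0 < Nat.card A := Nat.card_pos
  have hBpos : 0 < Nat.card B := Nat.card_pos
  have hmA := m_eq hbot hAcd
  have hmB := m_eq hbot hBcd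
  have s5 : Nat.card (Subgroup.centralizer (A : Set G)) = Nat.card B :=
    Nat.eq_of_mul_eq_mul_left hApos (by rw [hmA]; exact s4.symm)
  have s5b : Nat.card (Subgroup.centralizer (B : Set G)) = Nat.card A :=
    Nat.eq_of_mul_eq_mul_left hBpos (by rw [hmB]; exact s4.symm.trans (mul_comm _ _))
  -- A' := C(B)
  set A' := Subgroup.centralizer (B : Set G) with hA'def
  have hA'cd : A' ∈ CD G := (centralizer_CD hbot hBcd).1
  have hCA' : Subgroup.centralizer (A' : Set G) = B := (centralizer_CD hbot hBcd).2
  have hA'ne : A' ≠ ⊥ := by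
    intro h
    apply hBne
    rw [← hCA', h]
    exact centralizer_coe_bot
  -- A' is an atom
  have hA'atom : ∀ X ∈ CD G, X ≠ ⊥ → X ≤ A' → X = A' := by
    intro X hX hXne hXle
    have h1 : B ≤ Subgroup.centralizer (X : Set G) := by
      rw [← hCA']
      exact centralizer_le (SetLike.coe_subset_coe.mpr hXle)
    have h2 : Subgroup.centralizer (X : Set G) ≠ ⊤ := by
      intro h
      apply hXne
      have := (centralizer_CD hbot hX).2
      rw [h, hZ] at this
      exact this.symm
    have h3 : Subgroup.centralizer (X : Set G) = B :=
      hBmax _ (centralizer_CD hbot hX).1 h2 h1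
    have h4 := (centralizer_CD hbot hX).2
    rw [h3] at h4
    exact h4.symm
  -- A is abelian: A ≤ C(A)
  have hCAne : Subgroup.centralizer (A : Set G) ≠ ⊥ := by
    intro h
    apply hBne'
    apply Subgroup.eq_bot_of_card_eq
    rw [← s5, h, Subgroup.card_bot]
  have s8 : A ≤ Subgroup.centralizer (A : Set G) := by
    have hCAcd : Subgroup.centralizer (A : Set G) ∈ CD G := (centralizer_CD hbot hAcd).1
    have hinfCD := (sup_inf_CD hbot hAcd hCAcd).1
    by_cases h : A ⊓ Subgroup.centralizer (A : Set G) = ⊥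
    · exfalso
      have huniv := mul_set_univ h hmA
      obtain ⟨hN1, hN2, hsup⟩ := decomp (le_refl (Subgroup.centralizer (A : Set G))) huniv
      exact hindec ⟨A, Subgroup.centralizer (A : Set G), hAne, hCAne, hN1, hN2, h, hsup⟩
    · have := hAmin _ hinfCD h inf_le_left
      exact inf_eq_left.mp this
  -- A' ≤ B
  have s9 : A' ≤ B := by
    have hinfCD : A' ⊓ B ∈ CD G := (sup_inf_CD hbot hA'cd hBcd).1
    by_cases h : A' ⊓ B = ⊥
    · exfalso
      have hcard : Nat.card A' * Nat.card B = Nat.card G := by rw [hA'def, s5b, s4]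
      have huniv := mul_set_univ h hcard
      have hcent : B ≤ Subgroup.centralizer (A' : Set G) := hCA' ▸ le_refl B
      obtain ⟨hN1, hN2, hsup⟩ := decomp hcent huniv
      exact hindec ⟨A', B, hA'ne, hBne', hN1, hN2, h, hsup⟩
    · have := hA'atom _ hinfCD h inf_le_left
      exact inf_eq_left.mp this
  by_cases hdeg : Nat.card A = Nat.card B
  · -- degenerate case: |A| = |B|, conjugation trick
    have hAA : Nat.card A * Nat.card A = Nat.card G := by nth_rewrite 2 [hdeg]; exact s4
    have dA : ∀ g : G, conjS g A = A := by
      intro g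
      have hAgcd : conjS g A ∈ CD G := conjS_mem_CD hbot hAcd g
      have hAgcard : Nat.card (conjS g A) = Nat.card A := card_conjS g A
      have hinfCD : A ⊓ conjS g A ∈ CD G := (sup_inf_CD hbot hAcd hAgcd).1
      by_cases hc : A ⊓ conjS g A = ⊥
      · have hcard : Nat.card A * Nat.card (conjS g A) = Nat.card G := by rw [hAgcard]; exact hAA
        exact conjS_eq_of_mul_univ (mul_set_univ hc hcard)
      · have h1 := hAmin _ hinfCD hc inf_le_left
        have h2 : A ≤ conjS g A := inf_eq_left.mp h1
        exact (Subgroup.eq_of_le_of_card_ge h2 hAgcard.le).symm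
    have dB : ∀ g : G, conjS g B = B := by
      intro g
      have hBgcd : conjS g B ∈ CD G := conjS_mem_CD hbot hBcd g
      have hBgcard : Nat.card (conjS g B) = Nat.card B := card_conjS g B
      have hBB : Nat.card B * Nat.card (conjS g B) = Nat.card G := by
        rw [hBgcard]; nth_rewrite 1 [← hdeg]; exact s4
      by_cases hc : B ⊔ conjS g B = ⊤
      · have hcardrel := (sup_inf_CD hbot hBcd hBgcd).2.2
        rw [hc, Subgroup.card_top, hBB] at hcardrel
        have hinfone : Nat.card ↥(B ⊓ conjS g B) = 1 :=
          Nat.eq_of_mul_eq_mul_left hnpos (by rw [hcardrel, mul_one])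
        have hinfbot : B ⊓ conjS g B = ⊥ := Subgroup.eq_bot_of_card_eq _ hinfone
        have := conjS_eq_of_mul_univ (mul_set_univ hinfbot hBB)
        exfalso
        rw [this, sup_idem] at hc
        exact hBne hc
      · have h1 := hBmax _ (sup_inf_CD hbot hBcd hBgcd).2.1 hc le_sup_left
        have h2 : conjS g B ≤ B := sup_eq_left.mp h1
        exact Subgroup.eq_of_le_of_card_ge h2 hBgcard.ge
    exact hindec ⟨A, B, hAne, hBne', normal_of_conjS dA, normal_of_conjS dB, s1, s2⟩
  · -- non-degenerate case: |A| < |B|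
    have n10a : A ≠ A' := by
      intro h
      exact hAB (h ▸ s9)
    have n10b : A ⊓ A' = ⊥ := by
      by_cases h : A ⊓ A' = ⊥
      · exact h
      · exfalso
        have h1 := hAmin _ (sup_inf_CD hbot hAcd hA'cd).1 h inf_le_left
        have h2 : A ≤ A' := inf_eq_left.mp h1
        exact n10a (hA'atom A hAcd hAne h2)
    have n10c : A' ⊓ Subgroup.centralizer (A : Set G) = ⊥ := by
      have hCAcd : Subgroup.centralizer (A : Set G) ∈ CD G := (centralizer_CD hbot hAcd).1
      by_cases h : A' ⊓ Subgroup.centralizer (A : Set G) = ⊥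
      · exact h
      · exfalso
        have h1 := hA'atom _ (sup_inf_CD hbot hA'cd hCAcd).1 h inf_le_left
        have h2 : A' ≤ Subgroup.centralizer (A : Set G) := inf_eq_left.mp h1
        have h3 : A ≤ Subgroup.centralizer (A' : Set G) := Subgroup.le_centralizer_iff.mp h2
        rw [hCA'] at h3
        exact hAB h3
    set T := A ⊔ A' with hTdef
    have hTcd : T ∈ CD G := (sup_inf_CD hbot hAcd hA'cd).2.1
    have cardA' : Nat.card A' = Nat.card A := by rw [hA'def, s5b]
    have cardT : Nat.card T = Nat.card A * Nat.card A := by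
      have := (sup_inf_CD hbot hAcd hA'cd).2.2
      rw [n10b, Subgroup.card_bot, mul_one, cardA'] at this
      exact this
    set S := Subgroup.centralizer (T : Set G) with hSdef
    have hScd : S ∈ CD G := (centralizer_CD hbot hTcd).1
    have mT : Nat.card T * Nat.card S = Nat.card G := m_eq hbot hTcd
    have cardS_rel : Nat.card A * Nat.card S = Nat.card B := by
      apply Nat.eq_of_mul_eq_mul_left hApos
      calc Nat.card A * (Nat.card A * Nat.card S)
          = (Nat.card A * Nat.card A) * Nat.card S := by ring
        _ = Nat.card T * Nat.card S := by rw [cardT]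
        _ = Nat.card G := mT
        _ = Nat.card A * Nat.card B := s4.symm
    have hAleT : A ≤ T := le_sup_left
    have hA'leT : A' ≤ T := le_sup_right
    have hSleCA : S ≤ Subgroup.centralizer (A : Set G) :=
      centralizer_le (SetLike.coe_subset_coe.mpr hAleT)
    have hSleB : S ≤ B := by
      have : S ≤ Subgroup.centralizer (A' : Set G) :=
        centralizer_le (SetLike.coe_subset_coe.mpr hA'leT)
      rwa [hCA'] at this
    have hTB : T ⊔ B = ⊤ := by
      by_cases h : T ⊔ B = ⊤
      · exact h
      · exfalso
        have h1 := hBmax _ (sup_inf_CD hbot hTcd hBcd).2.1 h le_sup_right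
        have h2 : T ≤ B := sup_eq_right.mp h1
        exact hAB (hAleT.trans h2)
    have hTinfB : T ⊓ B = A' := by
      have hcardrel := (sup_inf_CD hbot hTcd hBcd).2.2
      rw [hTB, Subgroup.card_top] at hcardrel
      have hc2 : Nat.card G * Nat.card ↥(T ⊓ B) = Nat.card G * Nat.card A' := by
        calc Nat.card G * Nat.card ↥(T ⊓ B) = Nat.card T * Nat.card B := hcardrel
          _ = (Nat.card A * Nat.card A') * Nat.card B := by rw [cardT, cardA']
          _ = Nat.card A' * (Nat.card A * Nat.card B) := by ring
          _ = Nat.card A' * Nat.card G := by rw [s4]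
          _ = Nat.card G * Nat.card A' := mul_comm _ _
      have hc3 : Nat.card ↥(T ⊓ B) = Nat.card A' := Nat.eq_of_mul_eq_mul_left hnpos hc2
      have hle : A' ≤ T ⊓ B := le_inf hA'leT s9
      exact (Subgroup.eq_of_le_of_card_ge hle hc3.le).symm
    have hTS : T ⊓ S = ⊥ := by
      have h1 : T ⊓ S ≤ A' ⊓ Subgroup.centralizer (A : Set G) := by
        refine le_inf ?_ (inf_le_right.trans hSleCA)
        have : T ⊓ S ≤ T ⊓ B := inf_le_inf_left T hSleB
        rwa [hTinfB] at this
      rw [n10c] at h1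
      exact le_bot_iff.mp h1
    have univTS : (↑T * ↑S : Set G) = Set.univ := mul_set_univ hTS mT
    obtain ⟨hN1, hN2, hsupTS⟩ := decomp (le_refl S) univTS
    have hTne : T ≠ ⊥ := by
      intro h
      apply hAne
      have : A ≤ (⊥ : Subgroup G) := h ▸ hAleT
      exact le_bot_iff.mp this
    have hSne : S ≠ ⊥ := by
      intro h
      apply hdeg
      have : Nat.card S = 1 := by rw [h, Subgroup.card_bot]
      rw [this, mul_one] at cardS_rel
      exact cardS_rel
    exact hindec ⟨T, S, hTne, hSne, hN1, hN2, hTS, hsupTS⟩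
end
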